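/- arXiv:2308.05958 — 2 statements merged into one kernel-verified Lean document; each statement's English description precedes it below -/
import Mathlib

section
/- Let d ≥ 2 and m ≥ 1 be integers, let s_1, …, s_m ∈ ℝ^d be pairwise distinct, let μ ∈ ℝ be fixed, and let c_1, …, c_m ∈ ℂ. Suppose that ∑_{j=1}^m c_j exp(ρ·s_j) = 0 for every ρ ∈ ℂ^d satisfying ρ·ρ = μ i. Then c_j = 0 for every j = 1, …, m. -/
/-!
Choose a unit vector `e` with `⟪e, s j⟫` pairwise distinct (finitely many proper hyperplanes do
not cover `ℝ^d`) and a unit vector `f ⟂ e`, which exists because `d ≥ 2`. For `t > 0` and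
`σ = μ / (4t)` the vector `ρ = (t + iσ) e + (σ + it) f` satisfies `ρ · ρ = iμ`, and
`Re (ρ · s j) = t ⟪e, s j⟫ + σ ⟪f, s j⟫`. As `t → ∞` the term of the exponential sum with the
largest `⟪e, s j⟫` among the nonzero coefficients dominates all the others, so that coefficient
must vanish.
-/

open Filter Function Topology
open scoped RealInnerProductSpace

section InnerProductSpace

variable {E : Type*} [NormedAddCommGroup E] [InnerProductSpace ℝ E]

theorem exists_forall_inner_ne_zero {ι : Type*} [Finite ι] (v : ι → E) (hv : ∀ i, v i ≠ 0) :
    ∃ x : E, ∀ i, ⟪v i, x⟫ ≠ 0 :=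
  Module.Dual.exists_forall_ne_zero_of_forall_exists (fun i => innerₛₗ ℝ (v i))
    fun i => ⟨v i, by simpa using hv i⟩

theorem exists_norm_eq_one_injective_inner [Nontrivial E] {ι : Type*} [Finite ι] {s : ι → E}
    (hs : Injective s) : ∃ e : E, ‖e‖ = 1 ∧ Injective fun j => ⟪e, s j⟫ := by
  obtain ⟨x₀, hx₀⟩ := exists_ne (0 : E)
  -- the extra vector `x₀` forces the separating vector to be nonzero, so that it can be normalized
  let v : Option {p : ι × ι // p.1 ≠ p.2} → E := fun i => i.elim x₀ fun p => s p.1.1 - s p.1.2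
  have hv : ∀ i, v i ≠ 0 := by
    rintro (_ | ⟨⟨j, k⟩, hjk⟩)
    · exact hx₀
    · exact sub_ne_zero.mpr (hs.ne hjk)
  obtain ⟨x, hx⟩ := exists_forall_inner_ne_zero v hv
  have hx0 : x ≠ 0 := by rintro rfl; exact hx none (inner_zero_right _)
  refine ⟨(‖x‖⁻¹ : ℝ) • x, norm_smul_inv_norm hx0, fun j k hjk => ?_⟩
  by_contra hne
  apply hx (some ⟨(j, k), hne⟩)
  simp only [real_inner_smul_left] at hjk
  change ⟪s j - s k, x⟫ = 0
  rw [inner_sub_left, real_inner_comm x, real_inner_comm x,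
    mul_left_cancel₀ (inv_ne_zero (norm_ne_zero_iff.mpr hx0)) hjk, sub_self]

theorem exists_norm_eq_one_inner_eq_zero [FiniteDimensional ℝ E]
    (hE : 2 ≤ Module.finrank ℝ E) (e : E) : ∃ f : E, ‖f‖ = 1 ∧ ⟪e, f⟫ = 0 := by
  have hK : (ℝ ∙ e)ᗮ ≠ ⊥ := by
    intro hbot
    have hsum := (ℝ ∙ e).finrank_add_finrank_orthogonal
    have hle : Module.finrank ℝ (ℝ ∙ e) ≤ 1 := by
      simpa using finrank_span_le_card ({e} : Set E)
    rw [hbot, finrank_bot, add_zero] at hsum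
    omega
  obtain ⟨y, hy, hy0⟩ := Submodule.exists_mem_ne_zero_of_ne_bot hK
  refine ⟨(‖y‖⁻¹ : ℝ) • y, norm_smul_inv_norm hy0, ?_⟩
  rw [real_inner_smul_right, Submodule.mem_orthogonal_singleton_iff_inner_right.mp hy, mul_zero]

end InnerProductSpace

section Euclidean

variable {ι : Type*} [Fintype ι]

theorem sum_mul_add_mul_mul_eq (z w : ℂ) (e f x : EuclideanSpace ℝ ι) :
    ∑ i, (z * e i + w * f i) * x i = z * ⟪e, x⟫ + w * ⟪f, x⟫ := by
  simp only [PiLp.inner_apply, RCLike.inner_apply, conj_trivial, Complex.ofReal_sum,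
    Complex.ofReal_mul, Finset.mul_sum, ← Finset.sum_add_distrib]
  exact Finset.sum_congr rfl fun i _ => by ring

theorem sum_mul_add_mul_sq {e f : EuclideanSpace ℝ ι} (he : ‖e‖ = 1) (hf : ‖f‖ = 1)
    (hef : ⟪e, f⟫ = 0) (z w : ℂ) : ∑ i, (z * e i + w * f i) ^ 2 = z ^ 2 + w ^ 2 := by
  have hee : ⟪e, e⟫ = 1 := by rw [real_inner_self_eq_norm_sq, he, one_pow]
  have hff : ⟪f, f⟫ = 1 := by rw [real_inner_self_eq_norm_sq, hf, one_pow]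
  have hfe : ⟪f, e⟫ = 0 := by rw [real_inner_comm, hef]
  calc ∑ i, (z * e i + w * f i) ^ 2
      = z * ∑ i, (z * e i + w * f i) * e i + w * ∑ i, (z * e i + w * f i) * f i := by
        simp only [Finset.mul_sum, ← Finset.sum_add_distrib]
        exact Finset.sum_congr rfl fun i _ => by ring
    _ = z ^ 2 + w ^ 2 := by
        rw [sum_mul_add_mul_mul_eq, sum_mul_add_mul_mul_eq, hee, hff, hef, hfe]
        push_cast
        ring

end Euclidean

theorem Complex.add_mul_I_sq_add_add_mul_I_sq (t σ : ℝ) :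
    ((t : ℂ) + σ * I) ^ 2 + (σ + t * I) ^ 2 = 4 * t * σ * I := by
  linear_combination ((t : ℂ) ^ 2 + (σ : ℂ) ^ 2) * Complex.I_sq

theorem eq_zero_of_sum_mul_eq_zero_of_dominant {α ι 𝕜 : Type*} [Fintype ι] [NormedField 𝕜]
    {l : Filter α} [l.NeBot] {c : ι → 𝕜} {F : ι → α → 𝕜} {J : ι} {δ : ℝ} (hδ : 0 < δ)
    (hJ : ∀ᶠ x in l, δ ≤ ‖F J x‖) (hF : ∀ j ≠ J, Tendsto (fun x => c j * F j x) l (𝓝 0))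
    (hsum : ∀ᶠ x in l, ∑ j, c j * F j x = 0) : c J = 0 := by
  classical
  have hrest : Tendsto (fun x => -∑ j ∈ Finset.univ.erase J, c j * F j x) l (𝓝 0) := by
    simpa using (tendsto_finsetSum (Finset.univ.erase J) fun j hj =>
      hF j (Finset.ne_of_mem_erase hj)).neg
  have hdom : Tendsto (fun x => c J * F J x) l (𝓝 0) := by
    refine hrest.congr' ?_
    filter_upwards [hsum] with x hx
    rw [← Finset.add_sum_erase _ _ (Finset.mem_univ J)] at hx
    exact (eq_neg_of_add_eq_zero_left hx).symm
  have hle : ‖c J‖ * δ ≤ 0 := by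
    refine ge_of_tendsto (by simpa using hdom.norm) ?_
    filter_upwards [hJ] with x hx
    exact mul_le_mul_of_nonneg_left hx (norm_nonneg _)
  exact norm_le_zero_iff.mp (nonpos_of_mul_nonpos_left hle hδ)

theorem eq_zero_of_sum_mul_exp_eq_zero {ι : Type*} [Fintype ι] {c : ι → ℂ} {A : ι → ℝ}
    (hA : Injective A) {g : ι → ℝ → ℂ} {L : ι → ℝ}
    (hg : ∀ j, Tendsto (fun t => (g j t).re) atTop (𝓝 (L j)))
    (hsum : ∀ᶠ t in atTop, ∑ j, c j * Complex.exp (t * A j + g j t) = 0) : c = 0 := by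
  classical
  by_contra hc
  obtain ⟨J, hJ, hmax⟩ := (Finset.univ.filter (c · ≠ 0)).exists_max_image A
    (by simpa [Finset.Nonempty, funext_iff] using hc)
  rw [Finset.mem_filter] at hJ
  -- divide by `exp (t * A J)`: the `J`-th term stays of size `exp (L J)`, the others decay
  refine hJ.2 (eq_zero_of_sum_mul_eq_zero_of_dominant
    (l := atTop) (F := fun j t => Complex.exp (t * (A j - A J) + g j t))
    (Real.exp_pos (L J - 1)) ?_ ?_ ?_)
  · filter_upwards [(hg J).eventually (eventually_ge_nhds (sub_one_lt (L J)))] with t ht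
    simpa [Complex.norm_exp] using ht
  · intro j hj
    by_cases hcj : c j = 0
    · simp [hcj]
    have hlt : A j < A J := (hmax j (by simpa using hcj)).lt_of_ne (hA.ne hj)
    have hdecay : Tendsto (fun t : ℝ => Real.exp (t * (A j - A J) + (g j t).re)) atTop (𝓝 0) :=
      Real.tendsto_exp_atBot.comp
        ((tendsto_id.atTop_mul_const_of_neg (sub_neg.mpr hlt)).atBot_add (hg j))
    have hF : Tendsto (fun t : ℝ => Complex.exp (t * (A j - A J) + g j t)) atTop (𝓝 0) :=
      tendsto_zero_iff_norm_tendsto_zero.mpr (by simpa [Complex.norm_exp] using hdecay)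
    simpa using hF.const_mul (c j)
  · filter_upwards [hsum] with t ht
    rw [← mul_zero (Complex.exp (-(t * A J))), ← ht, Finset.mul_sum]
    refine Finset.sum_congr rfl fun j _ => ?_
    rw [mul_left_comm, ← Complex.exp_add]
    congr 2
    ring

theorem stmt11_general (d m : ℕ) (hd : 2 ≤ d)
    (s : Fin m → (Fin d → ℝ)) (hdist : Function.Injective s)
    (μ : ℝ) (c : Fin m → ℂ)
    (h : ∀ ρ : Fin d → ℂ, (∑ i, ρ i ^ 2 = (μ : ℂ) * Complex.I) →
      ∑ j, c j * Complex.exp (∑ i, ρ i * (s j i : ℂ)) = 0) :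
    ∀ j, c j = 0 := by
  have hE : 2 ≤ Module.finrank ℝ (EuclideanSpace ℝ (Fin d)) := by simpa using hd
  have : Nontrivial (EuclideanSpace ℝ (Fin d)) :=
    Module.nontrivial_of_finrank_pos (R := ℝ) (by omega)
  let x : Fin m → EuclideanSpace ℝ (Fin d) := fun j => WithLp.toLp 2 (s j)
  obtain ⟨e, he, hinj⟩ := exists_norm_eq_one_injective_inner (s := x)
    ((WithLp.toLp_injective 2).comp hdist)
  obtain ⟨f, hf, hef⟩ := exists_norm_eq_one_inner_eq_zero hE e
  let σ : ℝ → ℝ := fun t => μ / (4 * t)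
  have hσ : Tendsto σ atTop (𝓝 0) :=
    tendsto_const_nhds.div_atTop (tendsto_id.const_mul_atTop four_pos)
  let ρ : ℝ → Fin d → ℂ := fun t i => (t + σ t * Complex.I) * e i + (σ t + t * Complex.I) * f i
  refine congrFun (eq_zero_of_sum_mul_exp_eq_zero hinj (L := 0)
    (g := fun j t => σ t * Complex.I * ⟪e, x j⟫ + (σ t + t * Complex.I) * ⟪f, x j⟫) ?_ ?_)
  · intro j
    simpa using hσ.mul_const ⟪f, x j⟫
  · filter_upwards [eventually_ne_atTop 0] with t ht
    have hρ : ∑ i, ρ t i ^ 2 = μ * Complex.I := by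
      have hμ : 4 * t * σ t = μ := by simp only [σ]; field_simp
      rw [sum_mul_add_mul_sq he hf hef, Complex.add_mul_I_sq_add_add_mul_I_sq, ← hμ]
      push_cast
      ring
    convert h (ρ t) hρ using 4 with j
    rw [sum_mul_add_mul_mul_eq (x := x j)]
    ring

theorem stmt11 (d m : ℕ) (hd : 2 ≤ d) (hm : 1 ≤ m)
    (s : Fin m → (Fin d → ℝ)) (hdist : Function.Injective s)
    (μ : ℝ) (c : Fin m → ℂ)
    (h : ∀ ρ : Fin d → ℂ, (∑ i, ρ i ^ 2 = (μ : ℂ) * Complex.I) →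
      ∑ j, c j * Complex.exp (∑ i, ρ i * (s j i : ℂ)) = 0) :
    ∀ j, c j = 0 :=
  stmt11_general d m hd s hdist μ c h
end

section
/- Let d ≥ 2 and m ≥ 1 be integers, let s_1, …, s_m ∈ ℝ^d be pairwise distinct points that are all nonzero, let T* > 0 and let k ∈ ℤ. Then there exist complex vectors ρ_1, …, ρ_m ∈ ℂ^d with ρ_l·ρ_l = 2kπ i / T* for every l, such that for every right-hand side vector (R_1, …, R_m) ∈ ℂ^m there exists a unique vector (λ_1, …, λ_m) ∈ ℂ^m satisfying ∑_{j=1}^m λ_j exp(ρ_l·s_j) = R_l for all l = 1, …, m. -/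
/-!
All `ρ l` are taken on the complex quadric `ρ ⬝ᵥ ρ = c`, `c = 2kπi/T`. Pick a real direction
`w` separating the points `s j` and, as `d ≥ 2`, complex vectors `P, Q` with
`P ⬝ᵥ P = Q ⬝ᵥ Q = 0`, `P ⬝ᵥ Q = 1` and `re P = w`. Then `ρ t = t P + (c / 2t) Q` lies on the
quadric, and as `t → ∞` the functions `exp (ρ t ⬝ᵥ s j)` grow at the pairwise distinct
exponential rates `w ⬝ᵥ s j`; so the functions `ρ ↦ exp (ρ ⬝ᵥ s j)` are linearly independent
on the quadric. Linearly independent functions can be evaluated at suitable points so that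
their matrix of values is invertible, which gives the `ρ l`.
-/

open Matrix Function Filter Topology Complex

theorem LinearIndependent.span_range_flip_eq_top {X K ι : Type*} [Field K] [Fintype ι]
    {f : ι → X → K} (hf : LinearIndependent K f) :
    Submodule.span K (Set.range (flip f)) = ⊤ := by
  classical
  by_contra hne
  obtain ⟨φ, hφ, hker⟩ := Submodule.exists_le_ker_of_lt_top _ (lt_top_iff_ne_top.2 hne)
  have hrel : ∑ i, φ (fun j => if i = j then 1 else 0) • f i = 0 := by
    ext x
    have hx : φ (flip f x) = 0 := hker (Submodule.subset_span ⟨x, rfl⟩)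
    rw [φ.pi_apply_eq_sum_univ] at hx
    simpa [flip, mul_comm] using hx
  have hcoeff := Fintype.linearIndependent_iff.1 hf _ hrel
  exact hφ (LinearMap.ext fun v => by simp [φ.pi_apply_eq_sum_univ v, hcoeff])

theorem exists_isUnit_of_linearIndependent {X K ι : Type*} [Field K] [Fintype ι]
    [DecidableEq ι] {f : ι → X → K} (hf : LinearIndependent K f) :
    ∃ x : ι → X, IsUnit (Matrix.of fun j l => f j (x l)) := by
  obtain ⟨κ, a, -, hspan, hli⟩ := exists_linearIndependent' K (flip f)
  rw [hf.span_range_flip_eq_top] at hspan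
  let b : Module.Basis κ K (ι → K) := Module.Basis.mk hli hspan.ge
  have : Fintype κ := @Fintype.ofFinite κ (Module.Finite.finite_basis b)
  have hcard : Fintype.card ι = Fintype.card κ := by
    rw [← Module.finrank_eq_card_basis b, Module.finrank_fintype_fun_eq_card]
  let e := Fintype.equivOfCardEq hcard
  exact ⟨a ∘ e, linearIndependent_cols_iff_isUnit.1 (hli.comp e e.injective)⟩

theorem exists_ne_zero_injective_dotProduct {K n ι : Type*} [Field K] [Infinite K] [Fintype n]
    [Nonempty n] [Finite ι] {s : ι → n → K} (hs : Injective s) :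
    ∃ w : n → K, w ≠ 0 ∧ Injective fun i => w ⬝ᵥ s i := by
  classical
  let p : Option {q : ι × ι // q.1 ≠ q.2} → Submodule K (n → K) := fun o =>
    o.elim ⊥ fun q => LinearMap.ker (dotProductBilin K K (s q.1.1 - s q.1.2))
  have hp : ∀ o, p o ≠ ⊤ := by
    rintro (_ | ⟨⟨i, j⟩, hij⟩) htop
    · exact bot_ne_top htop
    · refine hij (hs (sub_eq_zero.1 (funext fun k => ?_)))
      have hk : Pi.single k 1 ∈ p (some ⟨(i, j), hij⟩) := htop ▸ Submodule.mem_top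
      simpa [p] using hk
  obtain ⟨w, hw⟩ : ∃ w, w ∉ ⋃ o, (p o : Set (n → K)) := by
    by_contra! h
    obtain ⟨o, ho⟩ := Subspace.exists_eq_top_of_iUnion_eq_univ (Set.eq_univ_of_forall h)
    exact hp o ho
  simp only [Set.mem_iUnion, not_exists] at hw
  refine ⟨w, fun h => hw none (by simp [p, h]), fun i j hij => ?_⟩
  by_contra hne
  exact hw (some ⟨(i, j), hne⟩) (by simp [p, dotProduct_comm _ w, hij])

theorem tendsto_exp_mul_add_div_atTop_of_re_neg {a : ℂ} (b : ℂ) (ha : a.re < 0) :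
    Tendsto (fun t : ℝ => exp (t * a + b / t)) atTop (𝓝 0) := by
  refine tendsto_exp_comap_re_atBot.comp (tendsto_comap_iff.2 ?_)
  have hre : (fun t : ℝ => (t * a + b / t).re) = fun t => t * a.re + b.re / t := by
    ext t; simp [div_ofReal_re]
  rw [comp_def, hre]
  exact (tendsto_id.atTop_mul_const_of_neg ha).atBot_add
    (tendsto_const_nhds.div_atTop tendsto_id)

theorem eq_zero_of_eventually_sum_mul_exp_eq_zero {ι : Type*} [Fintype ι] {α β g : ι → ℂ}
    (hα : Injective fun j => (α j).re)
    (h : ∀ᶠ t : ℝ in atTop, ∑ j, g j * exp (t * α j + β j / t) = 0) : g = 0 := by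
  classical
  by_contra hg
  obtain ⟨j₀, hj₀, hmax⟩ :=
    (Finset.univ.filter (g · ≠ 0)).exists_max_image (fun j => (α j).re)
      (by simpa [Finset.filter_nonempty_iff, funext_iff] using hg)
  have hgj₀ : g j₀ ≠ 0 := (Finset.mem_filter.1 hj₀).2
  set F : ℝ → ℂ := fun t => ∑ j, g j * exp (t * (α j - α j₀) + (β j - β j₀) / t)
  have hF : ∀ᶠ t in atTop, F t = 0 := h.mono fun t ht => by
    have hsplit : ∀ j, g j * exp (t * (α j - α j₀) + (β j - β j₀) / t) =
        g j * exp (t * α j + β j / t) / exp (t * α j₀ + β j₀ / t) := fun j => by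
      rw [mul_div_assoc, ← exp_sub]; ring_nf
    simp only [F, hsplit, ← Finset.sum_div, ht, zero_div]
  have hlim : Tendsto F atTop (𝓝 (g j₀)) := by
    rw [show g j₀ = ∑ j, if j = j₀ then g j else 0 by simp]
    refine tendsto_finsetSum _ fun j _ => ?_
    by_cases hj : j = j₀
    · subst hj; simp
    by_cases hgj : g j = 0
    · simp [hj, hgj]
    have hlt : (α j).re < (α j₀).re :=
      (hmax j (by simpa using hgj)).lt_of_ne fun h => hj (hα h)
    simpa [hj] using (tendsto_exp_mul_add_div_atTop_of_re_neg (β j - β j₀)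
      (by simpa using hlt)).const_mul (g j)
  exact hgj₀ <| tendsto_nhds_unique hlim <|
    tendsto_const_nhds.congr' (hF.mono fun t ht => ht.symm)

theorem ofReal_add_I_mul_dotProduct {n : Type*} [Fintype n] (w v w' v' : n → ℝ) :
    ((fun i => (w i : ℂ) + I * v i) ⬝ᵥ fun i => (w' i : ℂ) + I * v' i) =
      ((w ⬝ᵥ w' - v ⬝ᵥ v' : ℝ) : ℂ) + I * ((w ⬝ᵥ v' + v ⬝ᵥ w' : ℝ) : ℂ) := by
  simp only [dotProduct, ofReal_sub, ofReal_add, ofReal_sum, ofReal_mul, Finset.mul_sum,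
    ← Finset.sum_sub_distrib, ← Finset.sum_add_distrib]
  refine Finset.sum_congr rfl fun i _ => ?_
  ring_nf; rw [I_sq]; ring

theorem exists_dotProduct_eq_zero_and_dotProduct_self_eq {n : Type*} [Fintype n]
    (hn : 2 ≤ Fintype.card n) (w : n → ℝ) :
    ∃ v : n → ℝ, w ⬝ᵥ v = 0 ∧ v ⬝ᵥ v = w ⬝ᵥ w := by
  obtain ⟨y, hwy, hy⟩ := Submodule.exists_mem_ne_zero_of_ne_bot
    ((dotProductBilin ℝ ℝ w).ker_ne_bot_of_finrank_lt (by simpa using Nat.lt_of_succ_le hn))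
  have hnonneg (u : n → ℝ) : 0 ≤ u ⬝ᵥ u :=
    Finset.sum_nonneg fun i _ => mul_self_nonneg (u i)
  have hyy : 0 < y ⬝ᵥ y := (hnonneg y).lt_of_ne' (dotProduct_self_eq_zero.not.2 hy)
  refine ⟨√(w ⬝ᵥ w / y ⬝ᵥ y) • y, by simpa using Or.inr hwy, ?_⟩
  rw [smul_dotProduct, dotProduct_smul, smul_smul, smul_eq_mul,
    Real.mul_self_sqrt (div_nonneg (hnonneg w) hyy.le), div_mul_cancel₀ _ hyy.ne']

theorem exists_isotropic_pair_re_eq {n : Type*} [Fintype n] (hn : 2 ≤ Fintype.card n)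
    {w : n → ℝ} (hw : w ≠ 0) :
    ∃ P Q : n → ℂ, P ⬝ᵥ P = 0 ∧ Q ⬝ᵥ Q = 0 ∧ P ⬝ᵥ Q = 1 ∧
      ∀ x : n → ℝ, (P ⬝ᵥ fun i => (x i : ℂ)).re = w ⬝ᵥ x := by
  obtain ⟨v, hwv, hvv⟩ := exists_dotProduct_eq_zero_and_dotProduct_self_eq hn w
  have hN : ((w ⬝ᵥ w : ℝ) : ℂ) ≠ 0 := ofReal_ne_zero.2 (dotProduct_self_eq_zero.not.2 hw)
  set P : n → ℂ := fun i => (w i : ℂ) + I * v i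
  set Q : n → ℂ := fun i => (w i : ℂ) + I * (-v) i
  have hPP : P ⬝ᵥ P = 0 := by
    rw [ofReal_add_I_mul_dotProduct]; simp [hvv, dotProduct_comm v w, hwv]
  have hQQ : Q ⬝ᵥ Q = 0 := by
    rw [ofReal_add_I_mul_dotProduct]; simp [hvv, dotProduct_comm v w, hwv]
  have hPQ : P ⬝ᵥ Q = 2 * ((w ⬝ᵥ w : ℝ) : ℂ) := by
    rw [ofReal_add_I_mul_dotProduct, dotProduct_neg, dotProduct_neg, hvv, dotProduct_comm v w, hwv]
    push_cast; ring
  refine ⟨P, (2 * ((w ⬝ᵥ w : ℝ) : ℂ))⁻¹ • Q, hPP, ?_, ?_, fun x => ?_⟩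
  · rw [smul_dotProduct, dotProduct_smul, hQQ, smul_zero, smul_zero]
  · rw [dotProduct_smul, hPQ, smul_eq_mul]
    exact inv_mul_cancel₀ (mul_ne_zero two_ne_zero hN)
  · simp [P, dotProduct, re_sum]

theorem linearIndependent_exp_dotProduct_on_quadric {n ι : Type*} [Fintype n] [Fintype ι]
    (hn : 2 ≤ Fintype.card n) {s : ι → n → ℝ} (hs : Injective s) (c : ℂ) :
    LinearIndependent ℂ fun j (ρ : {ρ : n → ℂ // ρ ⬝ᵥ ρ = c}) =>
      exp (ρ.1 ⬝ᵥ fun i => (s j i : ℂ)) := by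
  have : Nonempty n := Fintype.card_pos_iff.1 (by omega)
  obtain ⟨w, hw0, hws⟩ := exists_ne_zero_injective_dotProduct hs
  obtain ⟨P, Q, hPP, hQQ, hPQ, hre⟩ := exists_isotropic_pair_re_eq hn hw0
  set ρ : ℝ → n → ℂ := fun t => (t : ℂ) • P + (c / (2 * t)) • Q
  have hρρ (t : ℝ) (ht : (t : ℂ) ≠ 0) : ρ t ⬝ᵥ ρ t = c := by
    simp only [ρ, add_dotProduct, dotProduct_add, smul_dotProduct, dotProduct_smul, hPP, hQQ,
      dotProduct_comm Q P, hPQ, smul_eq_mul]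
    field_simp
    ring
  set s' : ι → n → ℂ := fun j i => (s j i : ℂ)
  have hρs (t : ℝ) (j : ι) :
      ρ t ⬝ᵥ s' j = t * (P ⬝ᵥ s' j) + c / 2 * (Q ⬝ᵥ s' j) / t := by
    simp only [ρ, add_dotProduct, smul_dotProduct, smul_eq_mul]
    ring
  refine Fintype.linearIndependent_iff.2 fun g hg => congrFun ?_
  exact eq_zero_of_eventually_sum_mul_exp_eq_zero (α := fun j => P ⬝ᵥ s' j)
    (β := fun j => c / 2 * (Q ⬝ᵥ s' j)) (by simpa only [s', hre] using hws)
    ((eventually_ne_atTop 0).mono fun t ht => by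
      simpa [← hρs] using congrFun hg ⟨ρ t, hρρ t (ofReal_ne_zero.2 ht)⟩)

theorem stmt12_general (d m : ℕ) (hd : 2 ≤ d)
    (s : Fin m → (Fin d → ℝ)) (hdist : Function.Injective s)
    (T : ℝ) (k : ℤ) :
    ∃ ρ : Fin m → (Fin d → ℂ),
      (∀ l, ∑ i, ρ l i ^ 2 = 2 * (k : ℂ) * (Real.pi : ℂ) * Complex.I / (T : ℂ)) ∧
      ∀ R : Fin m → ℂ, ∃! Λ : Fin m → ℂ,
        ∀ l, ∑ j, Λ j * Complex.exp (∑ i, ρ l i * (s j i : ℂ)) = R l := by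
  obtain ⟨ρ, hA⟩ := exists_isUnit_of_linearIndependent
    (linearIndependent_exp_dotProduct_on_quadric (by simpa using hd) hdist
      (2 * k * Real.pi * I / T))
  refine ⟨fun l => (ρ l).1, fun l => by simpa [sq, dotProduct] using (ρ l).2, fun R => ?_⟩
  have hbij :
      Bijective (Matrix.of fun j l => exp ((ρ l).1 ⬝ᵥ fun i => (s j i : ℂ))).vecMul :=
    ⟨vecMul_injective_iff_isUnit.2 hA, vecMul_surjective_iff_isUnit.2 hA⟩
  simpa [funext_iff, vecMul, dotProduct] using hbij.existsUnique R

theorem stmt12 (d m : ℕ) (hd : 2 ≤ d) (hm : 1 ≤ m)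
    (s : Fin m → (Fin d → ℝ)) (hdist : Function.Injective s) (hnz : ∀ j, s j ≠ 0)
    (T : ℝ) (hT : 0 < T) (k : ℤ) :
    ∃ ρ : Fin m → (Fin d → ℂ),
      (∀ l, ∑ i, ρ l i ^ 2 = 2 * (k : ℂ) * (Real.pi : ℂ) * Complex.I / (T : ℂ)) ∧
      ∀ R : Fin m → ℂ, ∃! Λ : Fin m → ℂ,
        ∀ l, ∑ j, Λ j * Complex.exp (∑ i, ρ l i * (s j i : ℂ)) = R l :=
  stmt12_general d m hd s hdist T k
end
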